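/- Triangle local-complementation example: let |G⟩ = (C₁₂·C₁₃·C₂₃)|+⟩⊗|+⟩⊗|+⟩ be the 3-qutrit graph state of the triangle (each C_{lm} the controlled-Z gate Σω^{jk}|jk⟩⟨jk| on qutrits l,m), and |G′⟩ = (C₁₂·C₁₃·C₂₃²)|+⟩^{⊗3} the graph state of the 1-local complementation at vertex 1. Then there exist single-qutrit unitaries U₁, U₂, U₃ and a unit complex scalar c with |G′⟩ = c·(U₁⊗U₂⊗U₃)|G⟩. -/

import Mathlib

noncomputable def ω : ℂ := Complex.exp (2 * Real.pi * Complex.I / 3)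

/-- The triangle graph state |G⟩ = C₁₂C₁₃C₂₃ |+++⟩ on three qutrits. -/
noncomputable def Gstate : Fin 3 × Fin 3 × Fin 3 → ℂ := fun p =>
  (Real.sqrt 27 : ℂ)⁻¹ *
    ω ^ (p.1.val * p.2.1.val + p.1.val * p.2.2.val + p.2.1.val * p.2.2.val)

/-- The graph state |G′⟩ = C₁₂C₁₃C₂₃² |+++⟩ of the 1-local complementation at vertex 1
(the edge {2,3} gets doubled). -/
noncomputable def Gstate' : Fin 3 × Fin 3 × Fin 3 → ℂ := fun p =>
  (Real.sqrt 27 : ℂ)⁻¹ *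
    ω ^ (p.1.val * p.2.1.val + p.1.val * p.2.2.val + 2 * (p.2.1.val * p.2.2.val))

/-!
Put `m = k + l`. The phase gate `diag(ω^(k²))` on qutrits 2 and 3 turns the amplitude
`ω^(jk + jl + kl)` of `|G⟩` into `ω^(jm + m²) · ω^(2kl)`, because `k² + kl + l² ≡ m² + 2kl (mod 3)`.
As a function of `j`, `ω^(jm)` is the `m`-th Fourier basis vector, which the Fourier conjugate of
`diag(ω^(2m²))` multiplies by `ω^(2m²) = ω^(-m²)`, cancelling the remaining factor `ω^(m²)`.
-/

open Matrix

theorem IsPrimitiveRoot.sum_fin_pow_mul {R : Type*} [CommRing R] [IsDomain R] {ζ : R} {N : ℕ}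
    (hζ : IsPrimitiveRoot ζ N) (n : ℕ) :
    ∑ j : Fin N, ζ ^ (j.val * n) = if N ∣ n then (N : R) else 0 := by
  simp_rw [mul_comm _ n, pow_mul]
  rw [Fin.sum_univ_eq_sum_range (fun j => (ζ ^ n) ^ j)]
  split_ifs with hn
  · simp [(hζ.pow_eq_one_iff_dvd n).2 hn]
  · have hne : ζ ^ n - 1 ≠ 0 := sub_ne_zero.2 fun h => hn ((hζ.pow_eq_one_iff_dvd n).1 h)
    have hgeom := geom_sum_mul (ζ ^ n) N
    rw [← pow_mul, mul_comm n N, pow_mul, hζ.pow_eq_one, one_pow, sub_self] at hgeom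
    exact (mul_eq_zero.1 hgeom).resolve_right hne

theorem isPrimitiveRoot_ω : IsPrimitiveRoot ω 3 := by
  have h := Complex.isPrimitiveRoot_exp 3 three_ne_zero
  rwa [Nat.cast_ofNat] at h

theorem ω_pow_eq_pow_of_natCast_eq {a b : ℕ} (h : (a : ZMod 3) = b) : ω ^ a = ω ^ b := by
  have hmod : a % 3 = b % 3 := (ZMod.natCast_eq_natCast_iff a b 3).1 h
  rw [← pow_mod_orderOf, ← isPrimitiveRoot_ω.eq_orderOf, hmod, isPrimitiveRoot_ω.eq_orderOf,
    pow_mod_orderOf]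

theorem norm_ω_pow (n : ℕ) : ‖ω ^ n‖ = 1 := by
  rw [norm_pow, Complex.norm_eq_one_of_pow_eq_one isPrimitiveRoot_ω.pow_eq_one three_ne_zero,
    one_pow]

theorem star_ω_pow (n : ℕ) : star (ω ^ n) = ω ^ (2 * n) := by
  have h : star (ω ^ n) * ω ^ n = ω ^ (2 * n) * ω ^ n := by
    rw [Complex.star_def, Complex.conj_mul', norm_ω_pow, Complex.ofReal_one, one_pow, ← pow_add,
      (isPrimitiveRoot_ω.pow_eq_one_iff_dvd _).2 ⟨n, by ring⟩]
  exact mul_right_cancel₀ (pow_ne_zero n (isPrimitiveRoot_ω.ne_zero three_ne_zero)) h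

theorem star_ω_pow_mul_ω_pow (m n : ℕ) : star (ω ^ m) * ω ^ n = ω ^ (2 * m + n) := by
  rw [star_ω_pow, pow_add]

noncomputable def qutritPhase (a : ℕ) : Matrix (Fin 3) (Fin 3) ℂ :=
  diagonal fun k => ω ^ (a * k.val ^ 2)

noncomputable def qutritFourier : Matrix (Fin 3) (Fin 3) ℂ :=
  of fun j k => ω ^ (j.val * k.val) / (Real.sqrt 3 : ℂ)

theorem qutritPhase_mem_unitaryGroup (a : ℕ) : qutritPhase a ∈ unitaryGroup (Fin 3) ℂ := by
  rw [mem_unitaryGroup_iff', qutritPhase, star_eq_conjTranspose, diagonal_conjTranspose,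
    diagonal_mul_diagonal, ← diagonal_one]
  congr 1
  funext k
  rw [Pi.star_apply, star_ω_pow_mul_ω_pow, ← (isPrimitiveRoot_ω.pow_eq_one_iff_dvd _).2]
  exact ⟨a * k.val ^ 2, by ring⟩

theorem qutritFourier_mem_unitaryGroup : qutritFourier ∈ unitaryGroup (Fin 3) ℂ := by
  rw [mem_unitaryGroup_iff']
  ext i k
  have hsqrt : star (Real.sqrt 3 : ℂ) * Real.sqrt 3 = 3 := by
    rw [Complex.star_def, Complex.conj_ofReal, ← Complex.ofReal_mul,
      Real.mul_self_sqrt zero_le_three, Complex.ofReal_ofNat]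
  calc (star qutritFourier * qutritFourier) i k
      = (∑ j : Fin 3, ω ^ (j.val * (2 * i.val + k.val))) / 3 := by
        simp only [mul_apply, star_apply, qutritFourier, of_apply, star_div₀, Finset.sum_div,
          div_mul_div_comm, star_ω_pow_mul_ω_pow, hsqrt]
        congr! 3
        ring
    _ = (1 : Matrix (Fin 3) (Fin 3) ℂ) i k := by
        rw [isPrimitiveRoot_ω.sum_fin_pow_mul, one_apply]
        have hdvd : 3 ∣ 2 * i.val + k.val ↔ i = k := by omega
        split_ifs <;> simp_all

noncomputable def fourierPhase (a : ℕ) : Matrix (Fin 3) (Fin 3) ℂ :=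
  qutritFourier * qutritPhase a * star qutritFourier

theorem fourierPhase_mem_unitaryGroup (a : ℕ) : fourierPhase a ∈ unitaryGroup (Fin 3) ℂ :=
  mul_mem (mul_mem qutritFourier_mem_unitaryGroup (qutritPhase_mem_unitaryGroup a))
    (Unitary.star_mem qutritFourier_mem_unitaryGroup)

theorem fourierPhase_mul_qutritFourier (a : ℕ) :
    fourierPhase a * qutritFourier = qutritFourier * qutritPhase a := by
  rw [fourierPhase, Matrix.mul_assoc, mem_unitaryGroup_iff'.1 qutritFourier_mem_unitaryGroup,
    Matrix.mul_one]

theorem sum_fourierPhase_mul_ω_pow (a : ℕ) (j m : Fin 3) :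
    ∑ q : Fin 3, fourierPhase a j q * ω ^ (q.val * m.val) =
      ω ^ (a * m.val ^ 2) * ω ^ (j.val * m.val) := by
  have h := congrFun₂ (fourierPhase_mul_qutritFourier a) j m
  rw [mul_apply, qutritPhase, mul_diagonal] at h
  simp only [qutritFourier, of_apply, ← mul_div_assoc, ← Finset.sum_div, div_mul_eq_mul_div] at h
  rw [div_left_inj' (by simp), mul_comm] at h
  exact h

theorem sum_mul_diagonal_mul_diagonal {ι ι' κ R : Type*} [Fintype ι] [Fintype κ] [DecidableEq κ]
    [CommSemiring R] (A : Matrix ι' ι R) (d e : κ → R) (f : ι × κ × κ → R) (i : ι') (k l : κ) :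
    ∑ q : ι × κ × κ, A i q.1 * diagonal d k q.2.1 * diagonal e l q.2.2 * f q =
      d k * e l * ∑ q₁, A i q₁ * f (q₁, k, l) := by
  simp only [Fintype.sum_prod_type, diagonal_apply, mul_ite, mul_zero, ite_mul, zero_mul,
    Finset.sum_ite_eq, Finset.mem_univ, if_true, Finset.mul_sum]
  exact Finset.sum_congr rfl fun _ _ => by ring

theorem Gstate_apply (q k l : Fin 3) :
    Gstate (q, k, l) = (Real.sqrt 27 : ℂ)⁻¹ * ω ^ (k.val * l.val) * ω ^ (q.val * (k + l).val) := by
  rw [Gstate, mul_assoc, ← pow_add]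
  congr 1
  apply ω_pow_eq_pow_of_natCast_eq
  push_cast [Fin.val_add, ZMod.natCast_mod]
  ring

theorem triangle_local_complementation :
    ∃ (U₁ U₂ U₃ : Matrix (Fin 3) (Fin 3) ℂ) (c : ℂ),
      U₁ ∈ Matrix.unitaryGroup (Fin 3) ℂ ∧
      U₂ ∈ Matrix.unitaryGroup (Fin 3) ℂ ∧
      U₃ ∈ Matrix.unitaryGroup (Fin 3) ℂ ∧
      ‖c‖ = 1 ∧
      ∀ p : Fin 3 × Fin 3 × Fin 3,
        Gstate' p =
          c * ∑ q : Fin 3 × Fin 3 × Fin 3,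
            U₁ p.1 q.1 * U₂ p.2.1 q.2.1 * U₃ p.2.2 q.2.2 * Gstate q := by
  refine ⟨fourierPhase 2, qutritPhase 1, qutritPhase 1, 1, fourierPhase_mem_unitaryGroup 2,
    qutritPhase_mem_unitaryGroup 1, qutritPhase_mem_unitaryGroup 1, norm_one, ?_⟩
  rintro ⟨j, k, l⟩
  simp_rw [one_mul, qutritPhase, sum_mul_diagonal_mul_diagonal, Gstate_apply,
    mul_left_comm _ ((Real.sqrt 27 : ℂ)⁻¹ * _), ← Finset.mul_sum, sum_fourierPhase_mul_ω_pow]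
  have hexp : ω ^ (j.val * k.val + j.val * l.val + 2 * (k.val * l.val)) =
      ω ^ (1 * k.val ^ 2) * ω ^ (1 * l.val ^ 2) *
        (ω ^ (k.val * l.val) * (ω ^ (2 * (k + l).val ^ 2) * ω ^ (j.val * (k + l).val))) := by
    simp only [← pow_add]
    apply ω_pow_eq_pow_of_natCast_eq
    push_cast [Fin.val_add, ZMod.natCast_mod]
    linear_combination -(k.val ^ 2 + l.val ^ 2 + k.val * l.val : ZMod 3) * (ZMod.natCast_self 3)
  rw [Gstate', hexp]
  ring
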